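/- arXiv:2504.04554 — 2 statements merged into one kernel-verified Lean document; each statement's English description precedes it below -/
import Mathlib

section
/- (Forward error bound, small-update case.) Let A be an invertible n×n real matrix, let U, V be n×k real matrices, set λ = ‖U‖·‖V‖ and B = A + UVᵀ, and assume B is invertible. Assume λ ≤ (1/2)·σ_min(A), that the capacitance matrix I + Vᵀ A⁻¹ U is invertible, and that σ_min(A) ≤ 1 (equivalently ‖A⁻¹‖ ≥ 1). Let X be an n×n matrix with ‖X − A⁻¹‖ ≤ ε₁ ≤ 1 and ε₁ < 1/(2 λ ‖(I + Vᵀ A⁻¹ U)⁻¹‖); assume I + Vᵀ X U is invertible; and let Z be a k×k matrix with ‖Z − (I + Vᵀ X U)⁻¹‖ ≤ ε₂ ≤ 1. Then ‖B⁻¹ − (X − X U Z Vᵀ X)‖ ≤ 2 ε₂ ‖A⁻¹‖ + 12 ε₁. -/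
open Matrix
open scoped Matrix.Norms.L2Operator

/-!
By the Woodbury identity, `B⁻¹ = A⁻¹ - A⁻¹ U C⁻¹ Vᵀ A⁻¹` with `C = I + Vᵀ A⁻¹ U`, so the error is
the difference of two expressions `Y - Y U W Vᵀ Y`, which is first order in `A⁻¹ - X` and
`C⁻¹ - Z`, each term carrying a factor `λ = ‖U‖ ‖V‖`. The small-update hypothesis
`λ ‖A⁻¹‖ ≤ 1/2` gives `‖C⁻¹‖ ≤ 2`, and the condition on `ε₁` makes `I + Vᵀ X U` a perturbation
of `C` of relative size at most `1/2`, so its inverse lies within `8 λ ε₁` of `C⁻¹`.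
-/

namespace Matrix

section SMW

variable {R m n : Type*} [Ring R] [Fintype m] [Fintype n]

lemma smw_sub_smw (Y X : Matrix m m R) (U : Matrix m n R) (V : Matrix m n R)
    (W Z : Matrix n n R) :
    (Y - Y * U * W * Vᵀ * Y) - (X - X * U * Z * Vᵀ * X) = (Y - X) -
      ((Y - X) * U * W * Vᵀ * Y + X * U * (W - Z) * Vᵀ * Y + X * U * Z * Vᵀ * (Y - X)) := by
  simp only [Matrix.sub_mul, Matrix.mul_sub]
  abel

end SMW

section InversePerturbation

variable {𝕜 κ : Type*} [RCLike 𝕜] [Fintype κ] [DecidableEq κ]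

lemma l2_opNorm_one_le : ‖(1 : Matrix κ κ 𝕜)‖ ≤ 1 := by
  rw [cstar_norm_def, map_one]
  exact ContinuousLinearMap.norm_id_le

variable {C F : Matrix κ κ 𝕜}

lemma inv_sub_inv_add (hC : IsUnit C) (hCF : IsUnit (C + F)) :
    C⁻¹ - (C + F)⁻¹ = C⁻¹ * F * (C + F)⁻¹ := by
  rw [inv_sub_inv (iff_of_true hC hCF), add_sub_cancel_left]

lemma norm_inv_add_le (hC : IsUnit C) (hCF : IsUnit (C + F)) (h : ‖C⁻¹‖ * ‖F‖ ≤ 1 / 2) :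
    ‖(C + F)⁻¹‖ ≤ 2 * ‖C⁻¹‖ := by
  have : ‖(C + F)⁻¹‖ ≤ ‖C⁻¹‖ + ‖C⁻¹‖ * ‖F‖ * ‖(C + F)⁻¹‖ :=
    calc ‖(C + F)⁻¹‖ = ‖C⁻¹ - C⁻¹ * F * (C + F)⁻¹‖ := by
          rw [← inv_sub_inv_add hC hCF, sub_sub_cancel]
      _ ≤ ‖C⁻¹‖ + ‖C⁻¹ * F * (C + F)⁻¹‖ := norm_sub_le _ _
      _ ≤ ‖C⁻¹‖ + ‖C⁻¹‖ * ‖F‖ * ‖(C + F)⁻¹‖ := by gcongr; exact norm_mul₃_le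
  nlinarith [norm_nonneg (C + F)⁻¹]

lemma norm_inv_sub_inv_add_le (hC : IsUnit C) (hCF : IsUnit (C + F))
    (h : ‖C⁻¹‖ * ‖F‖ ≤ 1 / 2) : ‖C⁻¹ - (C + F)⁻¹‖ ≤ 2 * ‖C⁻¹‖ ^ 2 * ‖F‖ :=
  calc ‖C⁻¹ - (C + F)⁻¹‖ ≤ ‖C⁻¹‖ * ‖F‖ * ‖(C + F)⁻¹‖ := by
        rw [inv_sub_inv_add hC hCF]; exact norm_mul₃_le
    _ ≤ ‖C⁻¹‖ * ‖F‖ * (2 * ‖C⁻¹‖) := by gcongr; exact norm_inv_add_le hC hCF h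
    _ = 2 * ‖C⁻¹‖ ^ 2 * ‖F‖ := by ring

lemma norm_inv_one_add_le_two (hF : IsUnit (1 + F)) (h : ‖F‖ ≤ 1 / 2) : ‖(1 + F)⁻¹‖ ≤ 2 := by
  have h1 : ‖(1 : Matrix κ κ 𝕜)‖ ≤ 1 := l2_opNorm_one_le
  have := norm_inv_add_le isUnit_one hF (by rw [inv_one]; nlinarith [norm_nonneg F])
  rw [inv_one] at this
  linarith

end InversePerturbation

section Transpose

variable {l m n p q : Type*} [Fintype l] [Fintype m] [Fintype n] [Fintype p] [Fintype q]
  [DecidableEq m] [DecidableEq n] [DecidableEq p] [DecidableEq q]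

lemma l2_opNorm_transpose (V : Matrix m n ℝ) : ‖Vᵀ‖ = ‖V‖ := by
  rw [← conjTranspose_eq_transpose_of_trivial, l2_opNorm_conjTranspose]

lemma l2_opNorm_transpose_mul_mul_le (V : Matrix m n ℝ) (Y : Matrix m p ℝ) (U : Matrix p q ℝ) :
    ‖Vᵀ * Y * U‖ ≤ ‖U‖ * ‖V‖ * ‖Y‖ := by
  calc ‖Vᵀ * Y * U‖ ≤ ‖Vᵀ‖ * ‖Y‖ * ‖U‖ :=
        (l2_opNorm_mul _ _).trans (by gcongr; exact l2_opNorm_mul _ _)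
    _ = ‖U‖ * ‖V‖ * ‖Y‖ := by rw [l2_opNorm_transpose]; ring

lemma l2_opNorm_mul_mul_mul_transpose_mul_le (P : Matrix l m ℝ) (U : Matrix m n ℝ)
    (W : Matrix n n ℝ) (V : Matrix p n ℝ) (Q : Matrix p q ℝ) :
    ‖P * U * W * Vᵀ * Q‖ ≤ ‖U‖ * ‖V‖ * (‖P‖ * ‖W‖ * ‖Q‖) := by
  calc ‖P * U * W * Vᵀ * Q‖ ≤ ‖P‖ * ‖U‖ * ‖W‖ * ‖Vᵀ‖ * ‖Q‖ := by
        refine (l2_opNorm_mul _ _).trans ?_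
        gcongr
        refine (l2_opNorm_mul _ _).trans ?_
        gcongr
        refine (l2_opNorm_mul _ _).trans ?_
        gcongr
        exact l2_opNorm_mul _ _
    _ = ‖U‖ * ‖V‖ * (‖P‖ * ‖W‖ * ‖Q‖) := by rw [l2_opNorm_transpose]; ring

lemma norm_smw_sub_smw_le (Y X : Matrix m m ℝ) (U : Matrix m n ℝ) (V : Matrix m n ℝ)
    (W Z : Matrix n n ℝ) :
    ‖(Y - Y * U * W * Vᵀ * Y) - (X - X * U * Z * Vᵀ * X)‖ ≤ ‖Y - X‖ + ‖U‖ * ‖V‖ *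
      (‖Y - X‖ * ‖W‖ * ‖Y‖ + ‖X‖ * ‖W - Z‖ * ‖Y‖ + ‖X‖ * ‖Z‖ * ‖Y - X‖) := by
  rw [smw_sub_smw, mul_add, mul_add]
  refine (norm_sub_le _ _).trans (add_le_add_right ?_ _)
  refine (norm_add₃_le).trans (add_le_add_three ?_ ?_ ?_) <;>
    exact l2_opNorm_mul_mul_mul_transpose_mul_le _ _ _ _ _

lemma norm_inv_one_add_transpose_mul_mul_sub_le {Y X : Matrix m m ℝ} {U V : Matrix m n ℝ}
    (hY : IsUnit (1 + Vᵀ * Y * U)) (hX : IsUnit (1 + Vᵀ * X * U))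
    (h : ‖(1 + Vᵀ * Y * U)⁻¹‖ * (‖U‖ * ‖V‖ * ‖X - Y‖) ≤ 1 / 2) :
    ‖(1 + Vᵀ * X * U)⁻¹‖ ≤ 2 * ‖(1 + Vᵀ * Y * U)⁻¹‖ ∧
      ‖(1 + Vᵀ * Y * U)⁻¹ - (1 + Vᵀ * X * U)⁻¹‖ ≤
        2 * ‖(1 + Vᵀ * Y * U)⁻¹‖ ^ 2 * (‖U‖ * ‖V‖ * ‖X - Y‖) := by
  have hF := l2_opNorm_transpose_mul_mul_le V (X - Y) U
  have hXY : 1 + Vᵀ * X * U = 1 + Vᵀ * Y * U + Vᵀ * (X - Y) * U := by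
    simp only [Matrix.mul_sub, Matrix.sub_mul]; abel
  have hs : ‖(1 + Vᵀ * Y * U)⁻¹‖ * ‖Vᵀ * (X - Y) * U‖ ≤ 1 / 2 :=
    (mul_le_mul_of_nonneg_left hF (norm_nonneg _)).trans h
  rw [hXY] at hX ⊢
  exact ⟨norm_inv_add_le hY hX hs, (norm_inv_sub_inv_add_le hY hX hs).trans (by gcongr)⟩

lemma norm_inv_one_add_transpose_mul_mul_bounds {Y X : Matrix m m ℝ} {U V : Matrix m n ℝ}
    {ε : ℝ} (hY : IsUnit (1 + Vᵀ * Y * U)) (hX : IsUnit (1 + Vᵀ * X * U))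
    (hsmall : ‖U‖ * ‖V‖ * ‖Y‖ ≤ 1 / 2) (hXY : ‖X - Y‖ ≤ ε)
    (hε : ε < 1 / (2 * (‖U‖ * ‖V‖) * ‖(1 + Vᵀ * Y * U)⁻¹‖)) :
    ‖(1 + Vᵀ * Y * U)⁻¹‖ ≤ 2 ∧ ‖(1 + Vᵀ * X * U)⁻¹‖ ≤ 4 ∧
      ‖(1 + Vᵀ * Y * U)⁻¹ - (1 + Vᵀ * X * U)⁻¹‖ ≤ 8 * (‖U‖ * ‖V‖ * ε) := by
  have hYinv : ‖(1 + Vᵀ * Y * U)⁻¹‖ ≤ 2 :=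
    norm_inv_one_add_le_two hY ((l2_opNorm_transpose_mul_mul_le V Y U).trans hsmall)
  have h : ‖(1 + Vᵀ * Y * U)⁻¹‖ * (‖U‖ * ‖V‖ * ‖X - Y‖) ≤ 1 / 2 := by
    have := mul_le_of_le_div₀ zero_le_one (by positivity) hε.le
    calc _ ≤ ‖(1 + Vᵀ * Y * U)⁻¹‖ * (‖U‖ * ‖V‖ * ε) := by gcongr
      _ ≤ 1 / 2 := by linarith
  obtain ⟨hXinv, hYX⟩ := norm_inv_one_add_transpose_mul_mul_sub_le hY hX h
  refine ⟨hYinv, by linarith, hYX.trans ?_⟩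
  calc _ ≤ 2 * 2 ^ 2 * (‖U‖ * ‖V‖ * ε) := by gcongr
    _ = _ := by ring

end Transpose

end Matrix

theorem smw_forward_error_small_update_general {n k : ℕ}
    (A : Matrix (Fin n) (Fin n) ℝ) (hA : IsUnit A)
    (U V : Matrix (Fin n) (Fin k) ℝ) (lam : ℝ) (hlam : lam = ‖U‖ * ‖V‖)
    (B : Matrix (Fin n) (Fin n) ℝ) (hB : B = A + U * Vᵀ)
    (hsmall : lam ≤ (1 / 2) * ‖A⁻¹‖⁻¹)
    (hcap : IsUnit ((1 : Matrix (Fin k) (Fin k) ℝ) + Vᵀ * A⁻¹ * U))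
    (hσ : ‖A⁻¹‖⁻¹ ≤ 1)
    (X : Matrix (Fin n) (Fin n) ℝ) (ε₁ ε₂ : ℝ)
    (hX : ‖X - A⁻¹‖ ≤ ε₁) (hε₁1 : ε₁ ≤ 1)
    (hε₁ : ε₁ < 1 / (2 * lam * ‖((1 : Matrix (Fin k) (Fin k) ℝ) + Vᵀ * A⁻¹ * U)⁻¹‖))
    (hcapX : IsUnit ((1 : Matrix (Fin k) (Fin k) ℝ) + Vᵀ * X * U))
    (Z : Matrix (Fin k) (Fin k) ℝ)
    (hZ : ‖Z - ((1 : Matrix (Fin k) (Fin k) ℝ) + Vᵀ * X * U)⁻¹‖ ≤ ε₂) (hε₂1 : ε₂ ≤ 1) :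
    ‖B⁻¹ - (X - X * U * Z * Vᵀ * X)‖ ≤ 2 * ε₂ * ‖A⁻¹‖ + 12 * ε₁ := by
  subst hlam hB
  set C := (1 : Matrix (Fin k) (Fin k) ℝ) + Vᵀ * A⁻¹ * U
  have hε₁0 : 0 ≤ ε₁ := (norm_nonneg _).trans hX
  have hε₂0 : 0 ≤ ε₂ := (norm_nonneg _).trans hZ
  have hsmallA : ‖U‖ * ‖V‖ * ‖A⁻¹‖ ≤ 1 / 2 :=
    mul_le_of_le_mul_inv₀ (by norm_num) (norm_nonneg _) hsmall
  have hXn : ‖X‖ ≤ 2 * ‖A⁻¹‖ := by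
    rcases isEmpty_or_nonempty (Fin n)
    · simp [Subsingleton.elim X 0]
    · have h1 : 1 ≤ ‖A⁻¹‖ :=
        (inv_le_one₀ (norm_pos_iff.mpr (isUnit_nonsing_inv_iff.mpr hA).ne_zero)).mp hσ
      linarith [norm_le_norm_add_norm_sub' X A⁻¹]
  obtain ⟨hCinv, hKinv, hCK⟩ :=
    norm_inv_one_add_transpose_mul_mul_bounds hcap hcapX hsmallA hX hε₁
  have hZn : ‖Z‖ ≤ 5 := by linarith [norm_le_norm_add_norm_sub' Z (1 + Vᵀ * X * U)⁻¹]
  have hCZ : ‖C⁻¹ - Z‖ ≤ 8 * (‖U‖ * ‖V‖ * ε₁) + ε₂ := by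
    linarith [norm_sub_le_norm_sub_add_norm_sub C⁻¹ (1 + Vᵀ * X * U)⁻¹ Z,
      norm_sub_rev Z (1 + Vᵀ * X * U)⁻¹]
  have hwoodbury : (A + U * Vᵀ)⁻¹ = A⁻¹ - A⁻¹ * U * C⁻¹ * Vᵀ * A⁻¹ := by
    simpa using add_mul_mul_inv_eq_sub A U 1 Vᵀ hA isUnit_one (by simpa using hcap)
  rw [hwoodbury]
  refine (norm_smw_sub_smw_le A⁻¹ X U V C⁻¹ Z).trans ?_
  rw [norm_sub_rev] at hX
  calc _ ≤ ε₁ + ‖U‖ * ‖V‖ * (ε₁ * 2 * ‖A⁻¹‖ + 2 * ‖A⁻¹‖ * (8 * (‖U‖ * ‖V‖ * ε₁) + ε₂) * ‖A⁻¹‖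
        + 2 * ‖A⁻¹‖ * 5 * ε₁) := by gcongr
    _ ≤ 2 * ε₂ * ‖A⁻¹‖ + 12 * ε₁ := by
      have h₀ : 0 ≤ ε₂ * ‖A⁻¹‖ := by positivity
      have h₁ := mul_le_mul_of_nonneg_right hsmallA hε₁0
      have h₂ := mul_le_mul_of_nonneg_right hsmallA h₀
      have h₃ := mul_le_mul_of_nonneg_right (mul_self_le_mul_self (by positivity) hsmallA) hε₁0
      linear_combination 12 * h₁ + 2 * h₂ + 16 * h₃ + hε₁0 + h₀

/-- Forward error bound for approximate SMW, small-update case.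
Here σ_min(A) = ‖A⁻¹‖⁻¹. -/
theorem smw_forward_error_small_update {n k : ℕ}
    (A : Matrix (Fin n) (Fin n) ℝ) (hA : IsUnit A)
    (U V : Matrix (Fin n) (Fin k) ℝ) (lam : ℝ) (hlam : lam = ‖U‖ * ‖V‖)
    (B : Matrix (Fin n) (Fin n) ℝ) (hB : B = A + U * Vᵀ) (hBinv : IsUnit B)
    (hsmall : lam ≤ (1 / 2) * ‖A⁻¹‖⁻¹)
    (hcap : IsUnit ((1 : Matrix (Fin k) (Fin k) ℝ) + Vᵀ * A⁻¹ * U))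
    (hσ : ‖A⁻¹‖⁻¹ ≤ 1)
    (X : Matrix (Fin n) (Fin n) ℝ) (ε₁ ε₂ : ℝ)
    (hX : ‖X - A⁻¹‖ ≤ ε₁) (hε₁1 : ε₁ ≤ 1)
    (hε₁ : ε₁ < 1 / (2 * lam * ‖((1 : Matrix (Fin k) (Fin k) ℝ) + Vᵀ * A⁻¹ * U)⁻¹‖))
    (hcapX : IsUnit ((1 : Matrix (Fin k) (Fin k) ℝ) + Vᵀ * X * U))
    (Z : Matrix (Fin k) (Fin k) ℝ)
    (hZ : ‖Z - ((1 : Matrix (Fin k) (Fin k) ℝ) + Vᵀ * X * U)⁻¹‖ ≤ ε₂) (hε₂1 : ε₂ ≤ 1) :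
    ‖B⁻¹ - (X - X * U * Z * Vᵀ * X)‖ ≤ 2 * ε₂ * ‖A⁻¹‖ + 12 * ε₁ :=
  smw_forward_error_small_update_general A hA U V lam hlam B hB hsmall hcap hσ X ε₁ ε₂ hX hε₁1 hε₁
    hcapX Z hZ hε₂1
end

section
/- (Perturbation bound for the inverse capacitance matrix.) Let A be an invertible n×n real matrix, let U, V be n×k real matrices, and set λ = ‖U‖·‖V‖. Assume the capacitance matrix I + Vᵀ A⁻¹ U is invertible with ‖(I + Vᵀ A⁻¹ U)⁻¹‖ ≤ α. Let X be an n×n matrix with ‖X − A⁻¹‖ ≤ ε₁ where λ ε₁ < 1/(2α), and assume I + Vᵀ X U is invertible. Then ‖(I + Vᵀ X U)⁻¹ − (I + Vᵀ A⁻¹ U)⁻¹‖ ≤ 2 α² λ ε₁. -/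
open Matrix
open scoped Matrix.Norms.L2Operator Ring

/-!
Write `B = 1 + Vᵀ A⁻¹ U` and `C = 1 + Vᵀ X U`, so that `B - C = Vᵀ (A⁻¹ - X) U` has norm at most
`λ ε₁` and `α λ ε₁ ≤ 1/2`. Then `C = B (1 - B⁻¹ (B - C))` is invertible by the Neumann series, and
the identity `C⁻¹ - B⁻¹ = C⁻¹ (B - C) B⁻¹` gives `‖C⁻¹‖ ≤ α + ‖C⁻¹‖ / 2`, i.e. `‖C⁻¹‖ ≤ 2α`;
feeding this back into the identity yields `‖C⁻¹ - B⁻¹‖ ≤ 2α · λε₁ · α`.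
-/

section NormedRing

variable {R : Type*} [NormedRing R]

theorem isUnit_of_norm_inverse_mul_norm_sub_lt_one [HasSummableGeomSeries R] {b c : R}
    (hb : IsUnit b) (h : ‖b⁻¹ʳ‖ * ‖b - c‖ < 1) : IsUnit c := by
  have hc : c = b * (1 - b⁻¹ʳ * (b - c)) := by
    rw [mul_sub, ← mul_assoc, Ring.mul_inverse_cancel b hb, one_mul, mul_one, sub_sub_cancel]
  have hsmall : ‖b⁻¹ʳ * (b - c)‖ < 1 := (norm_mul_le _ _).trans_lt h
  rw [hc]
  exact hb.mul (Units.oneSub _ hsmall).isUnit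

theorem norm_inverse_sub_inverse_le_mul {b c : R} (h : IsUnit c ↔ IsUnit b) :
    ‖c⁻¹ʳ - b⁻¹ʳ‖ ≤ ‖c⁻¹ʳ‖ * ‖b - c‖ * ‖b⁻¹ʳ‖ := by
  rw [Ring.inverse_sub_inverse h]
  exact (norm_mul_le _ _).trans (mul_le_mul_of_nonneg_right (norm_mul_le _ _) (norm_nonneg _))

theorem norm_inverse_le_two_mul {b c : R} {α δ : ℝ} (h : IsUnit c ↔ IsUnit b)
    (hα : ‖b⁻¹ʳ‖ ≤ α) (hδ : ‖b - c‖ ≤ δ) (hαδ : α * δ ≤ 1 / 2) : ‖c⁻¹ʳ‖ ≤ 2 * α := by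
  have hdiff : ‖c⁻¹ʳ - b⁻¹ʳ‖ ≤ ‖c⁻¹ʳ‖ * δ * α := by
    refine (norm_inverse_sub_inverse_le_mul h).trans ?_
    exact mul_le_mul (mul_le_mul_of_nonneg_left hδ (norm_nonneg _)) hα (norm_nonneg _)
      (mul_nonneg (norm_nonneg _) ((norm_nonneg _).trans hδ))
  have htri : ‖c⁻¹ʳ‖ ≤ ‖b⁻¹ʳ‖ + ‖c⁻¹ʳ - b⁻¹ʳ‖ := norm_le_norm_add_norm_sub' _ _
  nlinarith [norm_nonneg c⁻¹ʳ]

theorem norm_inverse_sub_inverse_le [HasSummableGeomSeries R] {b c : R} {α δ : ℝ}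
    (hb : IsUnit b) (hα : ‖b⁻¹ʳ‖ ≤ α) (hδ : ‖b - c‖ ≤ δ) (hαδ : α * δ ≤ 1 / 2) :
    ‖c⁻¹ʳ - b⁻¹ʳ‖ ≤ 2 * α ^ 2 * δ := by
  have hδ0 : 0 ≤ δ := (norm_nonneg _).trans hδ
  have hc : IsUnit c := isUnit_of_norm_inverse_mul_norm_sub_lt_one hb <| by
    calc ‖b⁻¹ʳ‖ * ‖b - c‖ ≤ α * δ := mul_le_mul hα hδ (norm_nonneg _) ((norm_nonneg _).trans hα)
      _ < 1 := by linarith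
  have hcb : IsUnit c ↔ IsUnit b := iff_of_true hc hb
  calc ‖c⁻¹ʳ - b⁻¹ʳ‖ ≤ ‖c⁻¹ʳ‖ * ‖b - c‖ * ‖b⁻¹ʳ‖ := norm_inverse_sub_inverse_le_mul hcb
    _ ≤ (2 * α) * δ * α := by
      have hα0 : 0 ≤ α := (norm_nonneg _).trans hα
      gcongr
      exact norm_inverse_le_two_mul hcb hα hδ hαδ
    _ = 2 * α ^ 2 * δ := by ring

end NormedRing

theorem Matrix.l2_opNorm_transpose_mul_mul_le_s15 {l m n p : Type*} [Fintype l] [Fintype m]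
    [Fintype n] [Fintype p] [DecidableEq l] [DecidableEq m] [DecidableEq n] [DecidableEq p]
    (V : Matrix m l ℝ) (D : Matrix m n ℝ) (U : Matrix n p ℝ) : ‖Vᵀ * D * U‖ ≤ ‖V‖ * ‖D‖ * ‖U‖ := by
  have hV : ‖Vᵀ‖ = ‖V‖ := by
    rw [← conjTranspose_eq_transpose_of_trivial, l2_opNorm_conjTranspose]
  calc ‖Vᵀ * D * U‖ ≤ ‖Vᵀ * D‖ * ‖U‖ := l2_opNorm_mul _ _
    _ ≤ ‖V‖ * ‖D‖ * ‖U‖ := by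
      rw [← hV]
      exact mul_le_mul_of_nonneg_right (l2_opNorm_mul _ _) (norm_nonneg _)

theorem smw_capacitance_perturbation_general {n k : ℕ}
    (A : Matrix (Fin n) (Fin n) ℝ)
    (U V : Matrix (Fin n) (Fin k) ℝ) (lam : ℝ) (hlam : lam = ‖U‖ * ‖V‖)
    (α : ℝ) (hcap : IsUnit ((1 : Matrix (Fin k) (Fin k) ℝ) + Vᵀ * A⁻¹ * U))
    (hα : ‖((1 : Matrix (Fin k) (Fin k) ℝ) + Vᵀ * A⁻¹ * U)⁻¹‖ ≤ α)
    (X : Matrix (Fin n) (Fin n) ℝ) (ε₁ : ℝ)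
    (hX : ‖X - A⁻¹‖ ≤ ε₁) (hε₁ : lam * ε₁ < 1 / (2 * α)) :
    ‖((1 : Matrix (Fin k) (Fin k) ℝ) + Vᵀ * X * U)⁻¹ -
        ((1 : Matrix (Fin k) (Fin k) ℝ) + Vᵀ * A⁻¹ * U)⁻¹‖ ≤ 2 * α ^ 2 * lam * ε₁ := by
  have hdiff : ‖(1 + Vᵀ * A⁻¹ * U) - (1 + Vᵀ * X * U)‖ ≤ lam * ε₁ := by
    rw [add_sub_add_left_eq_sub, ← Matrix.sub_mul, ← Matrix.mul_sub, hlam]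
    calc ‖Vᵀ * (A⁻¹ - X) * U‖ ≤ ‖V‖ * ‖A⁻¹ - X‖ * ‖U‖ := l2_opNorm_transpose_mul_mul_le_s15 _ _ _
      _ = ‖V‖ * ‖X - A⁻¹‖ * ‖U‖ := by rw [norm_sub_rev]
      _ ≤ ‖V‖ * ε₁ * ‖U‖ := by gcongr
      _ = ‖U‖ * ‖V‖ * ε₁ := by ring
  have hsmall : α * (lam * ε₁) ≤ 1 / 2 := by
    rcases ((norm_nonneg _).trans hα).eq_or_lt with hα0 | hα0
    · rw [← hα0]; norm_num
    · rw [lt_div_iff₀ (by positivity)] at hε₁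
      linarith
  rw [nonsing_inv_eq_ringInverse] at hα
  have hbound := norm_inverse_sub_inverse_le hcap hα hdiff hsmall
  rwa [← nonsing_inv_eq_ringInverse, ← nonsing_inv_eq_ringInverse, ← mul_assoc] at hbound

/-- Perturbation bound for the inverse capacitance matrix. -/
theorem smw_capacitance_perturbation {n k : ℕ}
    (A : Matrix (Fin n) (Fin n) ℝ) (hA : IsUnit A)
    (U V : Matrix (Fin n) (Fin k) ℝ) (lam : ℝ) (hlam : lam = ‖U‖ * ‖V‖)
    (α : ℝ) (hcap : IsUnit ((1 : Matrix (Fin k) (Fin k) ℝ) + Vᵀ * A⁻¹ * U))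
    (hα : ‖((1 : Matrix (Fin k) (Fin k) ℝ) + Vᵀ * A⁻¹ * U)⁻¹‖ ≤ α)
    (X : Matrix (Fin n) (Fin n) ℝ) (ε₁ : ℝ)
    (hX : ‖X - A⁻¹‖ ≤ ε₁) (hε₁ : lam * ε₁ < 1 / (2 * α))
    (hcapX : IsUnit ((1 : Matrix (Fin k) (Fin k) ℝ) + Vᵀ * X * U)) :
    ‖((1 : Matrix (Fin k) (Fin k) ℝ) + Vᵀ * X * U)⁻¹ -
        ((1 : Matrix (Fin k) (Fin k) ℝ) + Vᵀ * A⁻¹ * U)⁻¹‖ ≤ 2 * α ^ 2 * lam * ε₁ :=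
  smw_capacitance_perturbation_general A U V lam hlam α hcap hα X ε₁ hX hε₁
end
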